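/- Let n be a positive integer and let v₀, v₁, …, v_n ∈ ℚⁿ be n+1 vectors such that every n-element subset of {v₀, …, v_n} is linearly independent over ℚ. Then: (a) there exist nonzero integers λ₀, …, λ_n with λ₀v₀ + λ₁v₁ + ⋯ + λ_n v_n = 0; and (b) setting w_i = |λ_i|·v_i and letting N′ be the additive subgroup of ℚⁿ generated by w₀, …, w_n, for every index j the n-element family (w_i)_{i ≠ j} is a ℤ-basis of N′, i.e. it generates N′ as a group and is ℤ-linearly independent. -/
import Mathlib


noncomputable section

private lemma subtype_sum_ne {M : Type*} [AddCommMonoid M] {n : ℕ} (j : Fin (n+1))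
    (f : Fin (n+1) → M) :
    ∑ i : {i : Fin (n+1) // i ≠ j}, f i = ∑ i ∈ ({j}ᶜ : Finset (Fin (n+1))), f i :=
  (Finset.sum_subtype _ (by simp) f).symm

private lemma my_int_sign_mul_self (a : ℤ) (ha : a ≠ 0) : a.sign * a = |a| := by
  rcases lt_trichotomy a 0 with h | h | h
  · simp [Int.sign_eq_neg_one_of_neg h, abs_of_neg h]
  · exact absurd h ha
  · simp [Int.sign_eq_one_of_pos h, abs_of_pos h]

/-- Fake weighted projective space lattice lemma: given `n+1` vectors in `ℚⁿ` any `n` of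
which are linearly independent, there is a relation `∑ λᵢ vᵢ = 0` with all `λᵢ ≠ 0`, and
setting `wᵢ = |λᵢ| • vᵢ` and `N′ = ⟨w₀, …, w_n⟩`, for every `j` the family `(wᵢ)_{i ≠ j}`
is a `ℤ`-basis of `N′`: it is `ℤ`-linearly independent and generates `N′` as a group. -/
theorem fake_weighted_projective_basis
    (n : ℕ) (hn : 0 < n) (v : Fin (n + 1) → (Fin n → ℚ))
    (hindep : ∀ j : Fin (n + 1),
      LinearIndependent ℚ (fun i : {i : Fin (n + 1) // i ≠ j} => v i)) :
    ∃ lam : Fin (n + 1) → ℤ,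
      (∀ i, lam i ≠ 0) ∧
      (∑ i, (lam i : ℚ) • v i = 0) ∧
      ∀ j : Fin (n + 1),
        LinearIndependent ℤ (fun i : {i : Fin (n + 1) // i ≠ j} => |lam i| • v i) ∧
        AddSubgroup.closure
            (Set.range (fun i : {i : Fin (n + 1) // i ≠ j} => |lam i| • v i)) =
          AddSubgroup.closure (Set.range (fun i : Fin (n + 1) => |lam i| • v i)) := by
  classical
  -- Step 1: the n+1 vectors are linearly dependent over ℚ.
  have hnotind : ¬ LinearIndependent ℚ v := by
    intro h
    have hc := h.fintype_card_le_finrank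
    simp [Module.finrank_fintype_fun_eq_card] at hc
  rw [Fintype.not_linearIndependent_iff] at hnotind
  obtain ⟨g, hg, i0, hi0⟩ := hnotind
  -- Step 2: every coefficient is nonzero.
  have hgne : ∀ i, g i ≠ 0 := by
    intro j hj
    have hzero : ∀ i : {i : Fin (n+1) // i ≠ j}, g i = 0 := by
      have hsum : ∑ i : {i : Fin (n+1) // i ≠ j}, g i • v i = 0 := by
        rw [subtype_sum_ne j (fun i => g i • v i)]
        rw [Fintype.sum_eq_add_sum_compl j (fun i => g i • v i), hj, zero_smul,
          zero_add] at hg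
        exact hg
      exact fun i => Fintype.linearIndependent_iff.mp (hindep j) (fun i => g (i : Fin (n+1))) hsum i
    have : g i0 = 0 := by
      by_cases h : i0 = j
      · rwa [h]
      · exact hzero ⟨i0, h⟩
    exact hi0 this
  -- Step 3: clear denominators.
  obtain ⟨b, hb⟩ := IsLocalization.exist_integer_multiples_of_finite
    (nonZeroDivisors ℤ) g
  have hb' : ∀ i, ∃ m : ℤ, (m : ℚ) = ((b : ℤ) : ℚ) * g i := by
    intro i
    obtain ⟨m, hm⟩ := hb i
    refine ⟨m, ?_⟩
    simpa [Algebra.smul_def] using hm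
  choose lam hlam using hb'
  have hbne : ((b : ℤ) : ℚ) ≠ 0 := by
    exact_mod_cast nonZeroDivisors.coe_ne_zero b
  have hlamne : ∀ i, lam i ≠ 0 := by
    intro i h
    have := hlam i
    rw [h] at this
    exact hgne i (by
      rcases mul_eq_zero.mp this.symm with h' | h'
      · exact absurd h' hbne
      · exact h')
  have hsumlam : ∑ i, (lam i : ℚ) • v i = 0 := by
    have : ∀ i, (lam i : ℚ) • v i = ((b : ℤ) : ℚ) • (g i • v i) := by
      intro i
      rw [hlam i, smul_smul]
    rw [Finset.sum_congr rfl (fun i _ => this i), ← Finset.smul_sum, hg, smul_zero]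
  refine ⟨lam, hlamne, hsumlam, ?_⟩
  intro j
  -- ℤ-independence of (|λᵢ| • vᵢ)_{i ≠ j}
  have habs : ∀ i : Fin (n+1), (|lam i| : ℤ) ≠ 0 := fun i => abs_ne_zero.mpr (hlamne i)
  have hQind : LinearIndependent ℚ (fun i : {i : Fin (n + 1) // i ≠ j} => |lam i| • v i) := by
    have h1 := (hindep j).units_smul
      (fun i : {i : Fin (n + 1) // i ≠ j} =>
        Units.mk0 ((|lam (i : Fin (n+1))| : ℤ) : ℚ) (by exact_mod_cast habs i))
    have heq : (fun i : {i : Fin (n + 1) // i ≠ j} => |lam (i : Fin (n+1))| • v i) =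
        (fun i : {i : Fin (n + 1) // i ≠ j} =>
          Units.mk0 ((|lam (i : Fin (n+1))| : ℤ) : ℚ) (by exact_mod_cast habs i))
          • (fun i : {i : Fin (n + 1) // i ≠ j} => v i) := by
      funext i
      funext x
      simp [Units.smul_def, Pi.smul_apply, ← Int.cast_smul_eq_zsmul ℚ]
    rw [heq]
    exact h1
  have hZind : LinearIndependent ℤ (fun i : {i : Fin (n + 1) // i ≠ j} => |lam i| • v i) :=
    hQind.restrict_scalars (by intro x y h; simpa [zsmul_eq_mul] using h)
  refine ⟨hZind, ?_⟩
  -- closure equality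
  refine le_antisymm (AddSubgroup.closure_mono ?_) (AddSubgroup.closure_le _ |>.mpr ?_)
  · rintro x ⟨i, rfl⟩
    exact ⟨(i : Fin (n+1)), rfl⟩
  · rintro x ⟨i, rfl⟩
    by_cases hij : i = j
    · -- the omitted vector lies in the span of the others
      subst hij
      -- integer relation in zsmul form
      have hsumz : ∑ k, lam k • v k = 0 := by
        rw [← hsumlam]
        exact Finset.sum_congr rfl (fun k _ => (Int.cast_smul_eq_zsmul ℚ (lam k) (v k)).symm)
      have hrest : ∑ k : {k : Fin (n+1) // k ≠ i}, lam (k : Fin (n+1)) • v k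
          = -(lam i • v i) := by
        rw [subtype_sum_ne i (fun k => lam k • v k)]
        rw [Fintype.sum_eq_add_sum_compl i (fun k => lam k • v k)] at hsumz
        exact eq_neg_of_add_eq_zero_right hsumz
      have key : |lam i| • v i = ∑ k : {k : Fin (n+1) // k ≠ i},
          (-(lam i).sign * (lam (k : Fin (n+1))).sign) • (|lam (k : Fin (n+1))| • v k) := by
        have hterm : ∀ k : {k : Fin (n+1) // k ≠ i},
            (-(lam i).sign * (lam (k : Fin (n+1))).sign) • (|lam (k : Fin (n+1))| • v k)
              = (-(lam i).sign) • (lam (k : Fin (n+1)) • v k) := by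
          intro k
          rw [smul_smul, mul_assoc, Int.sign_mul_abs, ← smul_smul]
        rw [Finset.sum_congr rfl (fun k _ => hterm k), ← Finset.smul_sum, hrest,
          smul_neg, neg_smul, neg_neg, smul_smul, my_int_sign_mul_self _ (hlamne i)]
      show |lam i| • v i ∈ _
      rw [key]
      exact AddSubgroup.sum_mem _ (fun k _ =>
        AddSubgroup.zsmul_mem _ (AddSubgroup.subset_closure (Set.mem_range_self k)) _)
    · exact AddSubgroup.subset_closure (Set.mem_range_self (⟨i, hij⟩ : {k : Fin (n+1) // k ≠ j}))

end
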